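/- arXiv:2511.19744 — 5 statements merged into one kernel-verified Lean document; each statement's English description precedes it below -/
import Mathlib

section
/- For all positive integers a and n, T(a*n) contains (T(a) ∪ T(n)) minus the set of prime divisors of a*n. -/
/-- A Toda prime of `n` is an odd prime `p` such that `p - 1` divides `4n`
and `gcd (p, 4n/(p-1)) = 1`. -/
def IsTodaPrime (n p : ℕ) : Prop :=
  p.Prime ∧ Odd p ∧ (p - 1) ∣ 4 * n ∧ Nat.gcd p (4 * n / (p - 1)) = 1

/-- The set of Toda primes of `n`. -/
def TodaSet (n : ℕ) : Set ℕ := {p | IsTodaPrime n p}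

theorem IsTodaPrime.mul_right {a n p : ℕ} (h : IsTodaPrime a p) (hpn : ¬p ∣ n) :
    IsTodaPrime (a * n) p := by
  obtain ⟨hp, hodd, hdvd, hcop⟩ := h
  have hquot : 4 * (a * n) / (p - 1) = 4 * a / (p - 1) * n := by
    rw [← mul_assoc, Nat.mul_div_right_comm hdvd]
  refine ⟨hp, hodd, (mul_assoc 4 a n).symm ▸ hdvd.mul_right n, ?_⟩
  rw [hquot]
  exact Nat.Coprime.mul_right hcop ((hp.coprime_iff_not_dvd).mpr hpn)

theorem IsTodaPrime.mul_left {a n p : ℕ} (h : IsTodaPrime n p) (hpa : ¬p ∣ a) :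
    IsTodaPrime (a * n) p :=
  mul_comm n a ▸ h.mul_right hpa

theorem toda_mul_superset_general (a n : ℕ) :
    (TodaSet a ∪ TodaSet n) \ {p | p.Prime ∧ p ∣ a * n} ⊆ TodaSet (a * n) := by
  rintro p ⟨ha | hn, hndvd⟩
  · exact ha.mul_right fun hpn => hndvd ⟨ha.1, hpn.mul_left a⟩
  · exact hn.mul_left fun hpa => hndvd ⟨hn.1, hpa.mul_right n⟩

theorem toda_mul_superset (a n : ℕ) (ha : 0 < a) (hn : 0 < n) :
    (TodaSet a ∪ TodaSet n) \ {p | p.Prime ∧ p ∣ a * n} ⊆ TodaSet (a * n) :=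
  toda_mul_superset_general a n
end

section
/- If a divides n (a, n positive integers), then T(a*n) contains T(n). -/
/-! A Toda prime `p` of `n` is coprime to both factors of `4n = (p - 1) · (4n / (p - 1))`,
hence to `n` and to every divisor `a` of `n`. Multiplying `n` by such an `a` multiplies the
cofactor `4n / (p - 1)` by `a`, which keeps it coprime to `p`. -/

namespace IsTodaPrime

variable {n p : ℕ}

theorem coprime (h : IsTodaPrime n p) : Nat.Coprime p n := by
  obtain ⟨hp, -, hdvd, hgcd⟩ := h
  have hsub : Nat.Coprime p (p - 1) :=
    (Nat.coprime_self_sub_right hp.one_le).mpr (Nat.coprime_one_right p)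
  have h4n : Nat.Coprime p (4 * n) := by
    rw [← Nat.mul_div_cancel' hdvd]
    exact hsub.mul_right hgcd
  exact h4n.coprime_dvd_right (dvd_mul_left n 4)

theorem mul_of_coprime {a : ℕ} (h : IsTodaPrime n p) (ha : Nat.Coprime p a) :
    IsTodaPrime (a * n) p := by
  obtain ⟨hp, hodd, hdvd, hgcd⟩ := h
  have hquot : 4 * (a * n) / (p - 1) = a * (4 * n / (p - 1)) := by
    rw [mul_left_comm, Nat.mul_div_assoc a hdvd]
  refine ⟨hp, hodd, hdvd.trans (mul_left_comm 4 a n ▸ dvd_mul_left _ a), ?_⟩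
  rw [hquot]
  exact ha.mul_right hgcd

end IsTodaPrime

theorem toda_mul_divisor_general (a n : ℕ) (hdvd : a ∣ n) :
    TodaSet n ⊆ TodaSet (a * n) :=
  fun _ hp => hp.mul_of_coprime (hp.coprime.coprime_dvd_right hdvd)

theorem toda_mul_divisor (a n : ℕ) (ha : 0 < a) (hn : 0 < n) (hdvd : a ∣ n) :
    TodaSet n ⊆ TodaSet (a * n) :=
  toda_mul_divisor_general a n hdvd
end

section
/- Let p ≥ 7 be prime. If there exists an integer x with Euler totient φ(x) = 4p, then T(p) equals {3, 5, 2p+1} or {3, 5, 4p+1}; otherwise T(p) = {3, 5}. -/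
open Nat

lemma eq_of_dvd_four_mul_prime {p d : ℕ} (hp : p.Prime) (hd : d ∣ 4 * p) :
    d = 1 ∨ d = 2 ∨ d = 4 ∨ d = p ∨ d = 2 * p ∨ d = 4 * p := by
  obtain ⟨a, b, ha, hb, rfl⟩ := Nat.dvd_mul.mp hd
  have : a ≤ 4 := Nat.le_of_dvd (by norm_num) ha
  rcases (Nat.dvd_prime hp).mp hb with rfl | rfl <;> interval_cases a <;> omega

lemma eq_of_prime_of_sub_one_dvd_four_mul {p q : ℕ} (hp : p.Prime) (hp2 : p ≠ 2) (hq : q.Prime)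
    (h : q - 1 ∣ 4 * p) : q = 2 ∨ q = 3 ∨ q = 5 ∨ q = 2 * p + 1 ∨ q = 4 * p + 1 := by
  have hp_odd : p % 2 = 1 := hp.eq_two_or_odd.resolve_left hp2
  have hq2 := hq.two_le
  by_cases hqp : q = p + 1
  · rcases hq.eq_one_or_self_of_dvd 2 (by omega) with h' | h' <;> omega
  · rcases eq_of_dvd_four_mul_prime hp h with h | h | h | h | h | h <;> omega

lemma isTodaPrime_iff {p q : ℕ} (hp : p.Prime) (h7 : 7 ≤ p) :
    IsTodaPrime p q ↔
      q = 3 ∨ q = 5 ∨ (q = 2 * p + 1 ∧ (2 * p + 1).Prime) ∨ (q = 4 * p + 1 ∧ (4 * p + 1).Prime) := by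
  constructor
  · rintro ⟨hq, hq_odd, hdvd, -⟩
    rcases eq_of_prime_of_sub_one_dvd_four_mul hp (by omega) hq hdvd with
      rfl | rfl | rfl | rfl | rfl
    exacts [absurd hq_odd (by decide), .inl rfl, .inr (.inl rfl), .inr (.inr (.inl ⟨rfl, hq⟩)),
      .inr (.inr (.inr ⟨rfl, hq⟩))]
  · rintro (rfl | rfl | ⟨rfl, hq⟩ | ⟨rfl, hq⟩)
    · refine ⟨prime_three, by decide, ⟨2 * p, by ring⟩, ?_⟩
      rw [show 4 * p / (3 - 1) = 2 * p by omega]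
      exact Nat.Coprime.mul_right (by norm_num) ((coprime_primes prime_three hp).mpr (by omega))
    · refine ⟨prime_five, by decide, ⟨p, by ring⟩, ?_⟩
      rw [show 4 * p / (5 - 1) = p by omega]
      exact (coprime_primes prime_five hp).mpr (by omega)
    · refine ⟨hq, odd_two_mul_add_one p, ⟨2, by omega⟩, ?_⟩
      rw [show 4 * p / (2 * p + 1 - 1) = 2 from Nat.div_eq_of_eq_mul_left (by omega) (by omega)]
      exact coprime_two_right.mpr (odd_two_mul_add_one p)
    · refine ⟨hq, ⟨2 * p, by ring⟩, ⟨1, by omega⟩, ?_⟩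
      rw [Nat.add_sub_cancel, Nat.div_self (by omega)]
      exact Nat.gcd_one_right _

lemma not_prime_two_mul_add_one_and_four_mul_add_one {p : ℕ} (hp : p.Prime) (hp3 : p ≠ 3) :
    ¬ ((2 * p + 1).Prime ∧ (4 * p + 1).Prime) := by
  rintro ⟨h2, h4⟩
  have hp1 := hp.two_le
  have : ¬ 3 ∣ p := fun h => hp3 ((Nat.prime_dvd_prime_iff_eq prime_three hp).mp h).symm
  by_cases h : p % 3 = 1
  · rcases h2.eq_one_or_self_of_dvd 3 (by omega) with h' | h' <;> omega
  · rcases h4.eq_one_or_self_of_dvd 3 (by omega) with h' | h' <;> omega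

lemma sq_dvd_or_exists_prime_dvd_of_dvd_totient {n p : ℕ} (hp : p.Prime) (h : p ∣ φ n) :
    p ^ 2 ∣ n ∨ ∃ q, q.Prime ∧ q ∣ n ∧ p ∣ q - 1 := by
  rcases eq_or_ne n 0 with rfl | hn
  · simp
  rw [totient_eq_prod_factorization hn, hp.prime.dvd_finsuppProd_iff] at h
  obtain ⟨q, hq_mem, hpq⟩ := h
  have hq : q.Prime := prime_of_mem_primeFactors hq_mem
  rcases (Nat.Prime.dvd_mul hp).mp hpq with hpow | hsub
  · left
    obtain rfl : p = q := (prime_dvd_prime_iff_eq hp hq).mp (hp.dvd_of_dvd_pow hpow)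
    have hk : 1 ≤ n.factorization p - 1 := by
      by_contra! h0
      simp [show n.factorization p - 1 = 0 by omega, hp.one_lt.ne'] at hpow
    exact (hp.pow_dvd_iff_le_factorization hn).mpr (by omega)
  · exact .inr ⟨q, hq, dvd_of_mem_primeFactors hq_mem, hsub⟩

lemma exists_totient_eq_four_mul_iff {p : ℕ} (hp : p.Prime) (h7 : 7 ≤ p) :
    (∃ x, φ x = 4 * p) ↔ (2 * p + 1).Prime ∨ (4 * p + 1).Prime := by
  constructor
  · rintro ⟨x, hx⟩
    rcases sq_dvd_or_exists_prime_dvd_of_dvd_totient hp (hx ▸ dvd_mul_left p 4) with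
      hsq | ⟨q, hq, hqx, hpq⟩
    · have h := hx ▸ totient_dvd_of_dvd hsq
      rw [totient_prime_pow hp two_pos, show 2 - 1 = 1 from rfl, pow_one, mul_comm 4 p] at h
      have := Nat.le_of_dvd (by norm_num) ((Nat.mul_dvd_mul_iff_left hp.pos).mp h)
      omega
    · have hq1 : q - 1 ∣ 4 * p := hx ▸ totient_prime hq ▸ totient_dvd_of_dvd hqx
      rcases eq_of_prime_of_sub_one_dvd_four_mul hp (by omega) hq hq1 with
        rfl | rfl | rfl | rfl | rfl
      iterate 3 exact absurd (Nat.le_of_dvd (by norm_num) hpq) (by omega)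
      exacts [.inl hq, .inr hq]
  · rintro (hq | hq)
    · refine ⟨4 * (2 * p + 1), ?_⟩
      have hcop : Coprime 4 (2 * p + 1) :=
        Coprime.pow_left 2 (coprime_two_left.mpr (odd_two_mul_add_one p))
      rw [totient_mul hcop, totient_prime hq, show φ 4 = 2 by decide]
      omega
    · exact ⟨4 * p + 1, by rw [totient_prime hq]; omega⟩

theorem toda_set_of_prime (p : ℕ) (hp : p.Prime) (h7 : 7 ≤ p) :
    ((∃ x : ℕ, Nat.totient x = 4 * p) →
      TodaSet p = {3, 5, 2 * p + 1} ∨ TodaSet p = {3, 5, 4 * p + 1}) ∧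
    ((¬ ∃ x : ℕ, Nat.totient x = 4 * p) → TodaSet p = {3, 5}) := by
  have hnot_both := not_prime_two_mul_add_one_and_four_mul_add_one hp (by omega)
  simp only [exists_totient_eq_four_mul_iff hp h7, Set.ext_iff, TodaSet, Set.mem_ofPred_eq,
    isTodaPrime_iff hp h7, Set.mem_insert_iff, Set.mem_singleton_iff]
  by_cases h2 : (2 * p + 1).Prime <;> by_cases h4 : (4 * p + 1).Prime <;> simp_all
end

section
/- Let m be a positive integer. If the denominator of the Bernoulli number B_{12m} equals 2730, then T(3m) = {5, 7, 13}. -/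
open Finset

theorem isTodaPrime_iff_not_dvd {n p : ℕ} :
    IsTodaPrime n p ↔ p.Prime ∧ Odd p ∧ (p - 1) ∣ 4 * n ∧ ¬ p ∣ 4 * n / (p - 1) := by
  refine and_congr_right fun hp ↦ ?_
  rw [← Nat.Coprime, hp.coprime_iff_not_dvd]

theorem prime_dvd_den_bernoulli {p k : ℕ} (hp : p.Prime) (hk : 0 < k) (hpk : (p - 1) ∣ 2 * k) :
    p ∣ (bernoulli (2 * k)).den := by
  have : Fact p.Prime := ⟨hp⟩
  set R := (Rat.padicValuation p).integer
  have mem_R {x : ℚ} : x ∈ R ↔ ¬ p ∣ x.den := Rat.padicValuation_le_one_iff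
  set P := {q ∈ range (2 * k + 2) | q.Prime ∧ (q - 1) ∣ 2 * k}
  have hpP : p ∈ P := by
    have := Nat.le_of_dvd (by omega) hpk
    simp only [P, mem_filter, mem_range]
    exact ⟨by omega, hp, hpk⟩
  obtain ⟨z, hz⟩ := Bernoulli.vonStaudt_clausen k
  rw [← add_sum_erase P _ hpP] at hz
  have hinv_p : (1 / p : ℚ) = z - bernoulli (2 * k) - ∑ q ∈ P.erase p, (1 / q : ℚ) := by
    rw [hz]; ring
  by_contra hB
  have hinv_q : ∀ q ∈ P.erase p, (1 / q : ℚ) ∈ R := by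
    intro q hq
    obtain ⟨hqp, hqP⟩ := mem_erase.mp hq
    have hq_prime := (mem_filter.mp hqP).2.1
    rw [mem_R, one_div, Rat.inv_natCast_den_of_pos hq_prime.pos,
      Nat.prime_dvd_prime_iff_eq hp hq_prime]
    exact Ne.symm hqp
  have : (1 / p : ℚ) ∈ R := by
    rw [hinv_p]
    refine R.sub_mem (R.sub_mem ?_ (mem_R.mpr hB)) (R.sum_mem hinv_q)
    simp [mem_R, hp.ne_one]
  rw [mem_R, one_div, Rat.inv_natCast_den_of_pos hp.pos] at this
  exact this dvd_rfl

theorem toda_of_bernoulli_2730 (m : ℕ) (hm : 0 < m)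
    (h : (bernoulli (12 * m)).den = 2730) : TodaSet (3 * m) = {5, 7, 13} := by
  have hden (r : ℕ) (hr : r.Prime) (hrm : (r - 1) ∣ 12 * m) : r ∣ 2730 := by
    rw [show 12 * m = 2 * (6 * m) by ring] at h hrm
    exact h ▸ prime_dvd_den_bernoulli hr (by omega) hrm
  have h5 : ¬ 5 ∣ m := fun h5 ↦ by simpa using hden 11 (by norm_num) (by omega)
  have h7 : ¬ 7 ∣ m := fun h7 ↦ by simpa using hden 29 (by norm_num) (by omega)
  have h13 : ¬ 13 ∣ m := fun h13 ↦ by simpa using hden 53 (by norm_num) (by omega)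
  ext q
  simp only [TodaSet, Set.mem_ofPred_eq, isTodaPrime_iff_not_dvd, Set.mem_insert_iff,
    Set.mem_singleton_iff]
  constructor
  · rintro ⟨hq, -, hqm, hq_not_dvd⟩
    have hq_factor : q ∈ Nat.primeFactorsList 2730 :=
      (Nat.mem_primeFactorsList (by norm_num)).mpr ⟨hq, hden q hq (by rwa [← mul_assoc] at hqm)⟩
    simp only [Nat.primeFactorsList_ofNat, List.mem_cons, List.not_mem_nil, or_false] at hq_factor
    rcases hq_factor with rfl | rfl | rfl | rfl | rfl <;> omega
  · rintro (rfl | rfl | rfl) <;> exact ⟨by norm_num, by decide, by omega, by omega⟩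
end

section
/- Let a be a positive integer and p ∈ T(a) with p > 5. For any positive integer m divisible by p: if p does not divide a and q = 2pi+1 is prime for some divisor i of 2a, then q - 1 divides 4am but q - 1 does not divide 4a; consequently the denominator of B_{4am} is strictly greater than the denominator of B_{4a}. -/
/-!
By von Staudt–Clausen, `B_{2k}` differs from `-∑ 1/p` over the primes with `p - 1 ∣ 2k` by an
integer, so its denominator is the product of these primes. Since `2i ∣ 4a` and `p ∣ m`, the
prime `q` with `q - 1 = 2pi` enters this set when passing from `4a` to `4am`, while `q - 1 ∤ 4a`
because the odd prime `p` does not divide `4a`; and the set only grows along multiples.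
-/

open Finset

theorem Rat.den_add_eq_mul_of_coprime {x y : ℚ} (h : x.den.Coprime y.den) :
    (x + y).den = x.den * y.den := by
  refine Nat.dvd_antisymm (Rat.add_den_dvd x y) (h.mul_dvd_of_dvd_of_dvd ?_ ?_)
  · have hx : x.den ∣ (x + y).den * y.den := by
      simpa [Rat.neg_den] using Rat.add_den_dvd (x + y) (-y)
    exact h.dvd_of_dvd_mul_right hx
  · have hy : y.den ∣ (x + y).den * x.den := by
      simpa [Rat.neg_den] using Rat.add_den_dvd (x + y) (-x)
    exact h.symm.dvd_of_dvd_mul_right hy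

theorem Rat.den_sum_eq_prod_den {ι : Type*} [DecidableEq ι] {s : Finset ι} {f : ι → ℚ}
    (h : (s : Set ι).Pairwise fun i j ↦ (f i).den.Coprime (f j).den) :
    (∑ i ∈ s, f i).den = ∏ i ∈ s, (f i).den := by
  induction s using Finset.induction_on with
  | empty => simp
  | insert a s ha ih =>
    rw [coe_insert, Set.pairwise_insert] at h
    have hcop : (f a).den.Coprime (∑ i ∈ s, f i).den := by
      rw [ih h.1]
      exact Nat.Coprime.prod_right fun i hi ↦ (h.2 i hi (ne_of_mem_of_not_mem hi ha).symm).1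
    rw [sum_insert ha, prod_insert ha, Rat.den_add_eq_mul_of_coprime hcop, ih h.1]

theorem Nat.prod_lt_prod_of_ssubset_of_prime {s t : Finset ℕ} (hst : s ⊂ t)
    (ht : ∀ p ∈ t, p.Prime) : ∏ p ∈ s, p < ∏ p ∈ t, p := by
  obtain ⟨q, hq⟩ := sdiff_nonempty.2 (not_subset.2 (exists_of_ssubset hst))
  have hsdiff : 1 < ∏ p ∈ t \ s, p :=
    (ht q (mem_sdiff.1 hq).1).one_lt.trans_le
      (single_le_prod' (fun p hp ↦ (ht p (mem_sdiff.1 hp).1).one_le) hq)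
  have hs : 0 < ∏ p ∈ s, p :=
    prod_pos fun p hp ↦ (ht p (hst.subset hp)).pos
  calc ∏ p ∈ s, p < (∏ p ∈ t \ s, p) * ∏ p ∈ s, p := lt_mul_left hs hsdiff
    _ = ∏ p ∈ t, p := prod_sdiff hst.subset

namespace Bernoulli

-- The set of `Bernoulli.vonStaudt_clausen`; the bound `p < 2 * k + 2` is automatic unless `k = 0`.
def denPrimes (k : ℕ) : Finset ℕ :=
  {p ∈ range (2 * k + 2) | p.Prime ∧ (p - 1) ∣ 2 * k}

theorem mem_denPrimes {k p : ℕ} (hk : 0 < k) :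
    p ∈ denPrimes k ↔ p.Prime ∧ (p - 1) ∣ 2 * k := by
  rw [denPrimes, mem_filter, mem_range, and_iff_right_iff_imp]
  rintro ⟨-, hp⟩
  have := Nat.le_of_dvd (by omega) hp
  omega

theorem prime_of_mem_denPrimes {k p : ℕ} (hp : p ∈ denPrimes k) : p.Prime :=
  (mem_filter.1 hp).2.1

theorem denPrimes_subset_of_dvd {k l : ℕ} (hl : 0 < l) (hkl : k ∣ l) :
    denPrimes k ⊆ denPrimes l := by
  intro p hp
  simp only [denPrimes, mem_filter, mem_range] at hp ⊢
  have := Nat.le_of_dvd hl hkl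
  exact ⟨by omega, hp.2.1, hp.2.2.trans (mul_dvd_mul_left 2 hkl)⟩

theorem den_bernoulli_two_mul (k : ℕ) :
    (bernoulli (2 * k)).den = ∏ p ∈ denPrimes k, p := by
  obtain ⟨z, hz⟩ := vonStaudt_clausen k
  have hB : bernoulli (2 * k) = z - ∑ p ∈ denPrimes k, (1 : ℚ) / p := by
    rw [hz, denPrimes]; ring
  have hden : ∀ p ∈ denPrimes k, ((1 : ℚ) / p).den = p := fun p hp ↦ by
    simp [(prime_of_mem_denPrimes hp).ne_zero]
  rw [hB, Rat.intCast_sub_den, Rat.den_sum_eq_prod_den, prod_congr rfl hden]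
  intro p hp r hr hpr
  rw [hden p hp, hden r hr]
  exact (Nat.coprime_primes (prime_of_mem_denPrimes hp) (prime_of_mem_denPrimes hr)).2 hpr

theorem den_bernoulli_lt_of_dvd {k l q : ℕ} (hl : 0 < l) (hkl : k ∣ l) (hq : q.Prime)
    (hql : (q - 1) ∣ 2 * l) (hqk : ¬ (q - 1) ∣ 2 * k) :
    (bernoulli (2 * k)).den < (bernoulli (2 * l)).den := by
  rw [den_bernoulli_two_mul, den_bernoulli_two_mul]
  refine Nat.prod_lt_prod_of_ssubset_of_prime ?_ fun p ↦ prime_of_mem_denPrimes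
  refine (ssubset_iff_of_subset (denPrimes_subset_of_dvd hl hkl)).2 ⟨q, ?_, ?_⟩
  · exact (mem_denPrimes hl).2 ⟨hq, hql⟩
  · exact fun hqk' ↦ hqk (mem_filter.1 hqk').2.2

end Bernoulli

theorem toda_denominator_growth_general (a p m i q : ℕ) (ha : 0 < a)
    (hpa : p ∈ TodaSet a) (hm : 0 < m) (hpm : p ∣ m)
    (hpna : ¬ p ∣ a) (hi : i ∣ 2 * a) (hq : q = 2 * p * i + 1) (hqp : q.Prime) :
    ((q - 1 ∣ 4 * a * m) ∧ ¬ (q - 1 ∣ 4 * a)) ∧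
      (bernoulli (4 * a)).den < (bernoulli (4 * a * m)).den := by
  obtain ⟨hpp, hpodd, -, -⟩ := hpa
  have hq_sub_one : q - 1 = 2 * p * i := by omega
  have hdvd : q - 1 ∣ 4 * a * m := by
    rw [hq_sub_one, show 4 * a * m = 2 * (2 * a) * m by ring, show 2 * p * i = 2 * i * p by ring]
    exact mul_dvd_mul (mul_dvd_mul_left 2 hi) hpm
  have hndvd : ¬ q - 1 ∣ 4 * a := by
    intro h
    have hp4a : p ∣ 4 * a := Nat.dvd_trans ⟨2 * i, by rw [hq_sub_one]; ring⟩ h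
    rcases hpp.dvd_mul.1 hp4a with hp4 | hp_dvd_a
    · have hp2 := hpp.dvd_of_dvd_pow (show p ∣ 2 ^ 2 from hp4)
      rw [(Nat.prime_dvd_prime_iff_eq hpp Nat.prime_two).1 hp2] at hpodd
      exact Nat.not_odd_iff_even.2 even_two hpodd
    · exact hpna hp_dvd_a
  refine ⟨⟨hdvd, hndvd⟩, ?_⟩
  rw [show 4 * a * m = 2 * (2 * a * m) by ring] at hdvd ⊢
  rw [show 4 * a = 2 * (2 * a) by ring] at hndvd ⊢
  exact Bernoulli.den_bernoulli_lt_of_dvd (by positivity) (dvd_mul_right _ _) hqp hdvd hndvd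

theorem toda_denominator_growth (a p m i q : ℕ) (ha : 0 < a)
    (hpa : p ∈ TodaSet a) (hp5 : 5 < p) (hm : 0 < m) (hpm : p ∣ m)
    (hpna : ¬ p ∣ a) (hi : i ∣ 2 * a) (hq : q = 2 * p * i + 1) (hqp : q.Prime) :
    ((q - 1 ∣ 4 * a * m) ∧ ¬ (q - 1 ∣ 4 * a)) ∧
      (bernoulli (4 * a)).den < (bernoulli (4 * a * m)).den :=
  toda_denominator_growth_general a p m i q ha hpa hm hpm hpna hi hq hqp
end
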